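/- Let f be a transcendental entire function. Then the following are equivalent: (b) there exist r_0 > 1 and c > 0 such that for every k > 1, M(r^k) ≥ M(r)^{k·k^c} for all r ≥ r_0; (c) there exist r_1 > 1, k > 1 and d > 1 such that M(r^k) ≥ M(r)^{kd} for all r ≥ r_1. -/

import Mathlib

open Set Filter

/-- The maximum modulus of `f` on the circle of radius `r`. -/
noncomputable def maxMod (f : ℂ → ℂ) (r : ℝ) : ℝ :=
  sSup ((fun z => ‖f z‖) '' {z : ℂ | ‖z‖ = r})

/-- The minimum modulus of `f` on the circle of radius `r`. -/
noncomputable def minMod (f : ℂ → ℂ) (r : ℝ) : ℝ :=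
  sInf ((fun z => ‖f z‖) '' {z : ℂ | ‖z‖ = r})

/-- `f` is a transcendental entire function: entire and not a polynomial. -/
def TranscendentalEntire (f : ℂ → ℂ) : Prop :=
  Differentiable ℂ f ∧ ¬ ∃ p : Polynomial ℂ, ∀ z, f z = p.eval z

/-- `μ_ε(r) = M(r)^ε`. -/
noncomputable def muEps (f : ℂ → ℂ) (ε : ℝ) (r : ℝ) : ℝ := (maxMod f r) ^ ε

/-- The fast escaping set `A(f)`. -/
def fastEscaping (f : ℂ → ℂ) : Set ℂ :=
  {z : ℂ | ∀ R : ℝ, 0 < R → (∀ r ≥ R, r < maxMod f r) →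
    ∃ ℓ : ℕ, ∀ n : ℕ, (maxMod f)^[n] R ≤ ‖f^[n + ℓ] z‖}

/-- The set `Q_ε(f)`. -/
def Qeps (f : ℂ → ℂ) (ε : ℝ) : Set ℂ :=
  {z : ℂ | ∀ R : ℝ, 0 < R → (∀ r ≥ R, r < muEps f ε r) →
    ∃ ℓ : ℕ, ∀ n : ℕ, (muEps f ε)^[n] R ≤ ‖f^[n + ℓ] z‖}

/-- The quite fast escaping set `Q(f) = ⋃_{0<ε<1} Q_ε(f)`. -/
def Qset (f : ℂ → ℂ) : Set ℂ := ⋃ ε ∈ Ioo (0:ℝ) 1, Qeps f ε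

/-- `f` is `ε`-regular. -/
def epsRegular (f : ℂ → ℂ) (ε : ℝ) : Prop :=
  ∀ R : ℝ, 0 < R → (∀ r ≥ R, r < maxMod f r) →
    ∃ r : ℝ, 0 < r ∧ ∀ n : ℕ, (maxMod f)^[n] R ≤ (muEps f ε)^[n] r

/-- `f` is weakly regular: `ε`-regular for every `ε ∈ (0,1)`. -/
def weaklyRegular (f : ℂ → ℂ) : Prop := ∀ ε ∈ Ioo (0:ℝ) 1, epsRegular f ε

/-- `f` is log-regular (characterization from Corollary 4.3). -/
def logRegular (f : ℂ → ℂ) : Prop :=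
  ∃ r₁ > (1:ℝ), ∃ k > (1:ℝ), ∃ d > (1:ℝ), ∀ r ≥ r₁,
    (maxMod f r) ^ (k * d) ≤ maxMod f (r ^ k)

/-!
By Hadamard's three circles theorem, `φ t = log M(eᵗ)` is convex. Condition (c) reads
`φ (k t) ≥ k d φ t`; iterating it gives `φ (kⁿ t) ≥ (k d)ⁿ φ t`, and comparing `φ` with its chord
through `t / k` and `t` gives `φ (L t) ≥ (1 + β (L - 1)) φ t` for `L ≥ 1`, where
`β = (k - 1/d) / (k - 1) > 1`. Writing `K = L kⁿ` with `1 ≤ L ≤ k`, the two combine to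
`φ (K t) ≥ K^(1+c) φ t` once `k^c ≤ d` and the convex function `L^(1+c)` lies below the line
`1 + β (L - 1)` on `[1, k]`, which holds for all small `c > 0`. The converse is the case `k = 2`.
-/

open Real Topology

section MaxMod

variable {f : ℂ → ℂ}

lemma setOf_norm_eq_sphere (r : ℝ) : {z : ℂ | ‖z‖ = r} = Metric.sphere 0 r := by
  ext z
  simp

lemma norm_le_maxMod (hf : Continuous f) {z : ℂ} {r : ℝ} (hz : ‖z‖ = r) :
    ‖f z‖ ≤ maxMod f r := by
  refine le_csSup ?_ ⟨z, hz, rfl⟩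
  rw [setOf_norm_eq_sphere]
  exact ((isCompact_sphere 0 r).image (continuous_norm.comp hf)).bddAbove

lemma exists_norm_eq_maxMod (hf : Continuous f) {r : ℝ} (hr : 0 ≤ r) :
    ∃ z : ℂ, ‖z‖ = r ∧ ‖f z‖ = maxMod f r := by
  rw [maxMod, setOf_norm_eq_sphere] at *
  exact (isCompact_sphere 0 r).exists_sSup_image_eq (NormedSpace.sphere_nonempty.2 hr)
    (continuous_norm.comp hf).continuousOn |>.imp fun z ⟨hz, h⟩ => ⟨by simpa using hz, h.symm⟩

lemma maxMod_mono (hf : Differentiable ℂ f) : MonotoneOn (maxMod f) (Ici 0) := by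
  intro r hr R _ hrR
  obtain ⟨z, hz, hfz⟩ := exists_norm_eq_maxMod hf.continuous hr
  rw [← hfz]
  rcases hrR.eq_or_lt with rfl | hlt
  · exact norm_le_maxMod hf.continuous hz
  have hR : R ≠ 0 := (lt_of_le_of_lt hr hlt).ne'
  refine Complex.norm_le_of_forall_mem_frontier_norm_le (U := Metric.ball 0 R)
    Metric.isBounded_ball hf.diffContOnCl (fun w hw => norm_le_maxMod hf.continuous ?_) ?_
  · rw [frontier_ball 0 hR] at hw
    simpa using hw
  · rw [closure_ball 0 hR]
    simpa [hz] using hrR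

lemma tendsto_maxMod_atTop (hf : Differentiable ℂ f) (hnc : ∀ c : ℂ, f ≠ Function.const ℂ c) :
    Tendsto (maxMod f) atTop atTop := by
  refine tendsto_atTop.2 fun C => ?_
  by_contra h
  have hbound : ∀ z, ‖f z‖ ≤ C := fun z => by
    obtain ⟨r, hr, hMr⟩ := frequently_atTop.1 (not_eventually.1 h) ‖z‖
    exact (norm_le_maxMod hf.continuous rfl).trans
      ((maxMod_mono hf (norm_nonneg z) ((norm_nonneg z).trans hr) hr).trans (not_le.1 hMr).le)
  obtain ⟨c, hc⟩ := hf.exists_const_forall_eq_of_bounded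
    (isBounded_iff_forall_norm_le.2 ⟨C, by rintro _ ⟨z, rfl⟩; exact hbound z⟩)
  exact hnc c (funext hc)

end MaxMod

section ThreeLines

variable {f : ℂ → ℂ}

noncomputable def logMaxModExp (f : ℂ → ℂ) (t : ℝ) : ℝ := log (maxMod f (exp t))

lemma rpow_maxMod_exp_le_iff {t K e : ℝ} (h₁ : 0 < maxMod f (exp t))
    (h₂ : 0 < maxMod f (exp (K * t))) :
    maxMod f (exp t) ^ e ≤ maxMod f (exp t ^ K) ↔
      e * logMaxModExp f t ≤ logMaxModExp f (K * t) := by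
  rw [← exp_mul, mul_comm t]
  exact rpow_le_iff_le_log h₁ h₂

open Complex.HadamardThreeLines in
lemma maxMod_exp_le_rpow_mul_rpow (hf : Differentiable ℂ f) {x y a b : ℝ} (hxy : x < y)
    (ha : 0 ≤ a) (hb : 0 ≤ b) (hab : a + b = 1) :
    maxMod f (exp (a * x + b * y)) ≤ maxMod f (exp x) ^ a * maxMod f (exp y) ^ b := by
  obtain rfl : a = 1 - b := by linarith
  have hbound (z : ℂ) : ‖f (Complex.exp z)‖ ≤ maxMod f (exp z.re) :=
    norm_le_maxMod hf.continuous (Complex.norm_exp z)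
  obtain ⟨w, hw, hfw⟩ := exists_norm_eq_maxMod hf.continuous (exp_pos ((1 - b) * x + b * y)).le
  have hw0 : w ≠ 0 := norm_ne_zero_iff.1 (hw ▸ (exp_pos _).ne')
  have hlog_re : (Complex.log w).re = (1 - b) * x + b * y := by
    rw [Complex.log_re, hw, log_exp]
  have hmem : Complex.log w ∈ verticalClosedStrip x y := by
    simp only [verticalClosedStrip, mem_preimage, hlog_re, mem_Icc]
    constructor <;>
      nlinarith [mul_nonneg hb (sub_pos.2 hxy).le, mul_nonneg ha (sub_pos.2 hxy).le]
  have hthree := norm_le_interp_of_mem_verticalClosedStrip' (f := f ∘ Complex.exp) hxy hmem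
    (hf.comp Complex.differentiable_exp).diffContOnCl
    ⟨maxMod f (exp y), by
      rintro _ ⟨z, hz, rfl⟩
      exact (hbound z).trans (maxMod_mono hf (exp_pos _).le (exp_pos _).le
        (exp_le_exp.2 hz.2))⟩
    (fun z hz => (hbound z).trans_eq (by rw [show z.re = x from hz]))
    (fun z hz => (hbound z).trans_eq (by rw [show z.re = y from hz]))
  have hb_eq : ((1 - b) * x + b * y - x) / (y - x) = b := by
    field_simp [(sub_pos.2 hxy).ne']
    ring
  rwa [Function.comp_apply, Complex.exp_log hw0, hfw, hlog_re, hb_eq] at hthree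

lemma convexOn_logMaxModExp (hf : Differentiable ℂ f) {t₀ : ℝ}
    (hpos : ∀ t ≥ t₀, 0 < maxMod f (exp t)) : ConvexOn ℝ (Ici t₀) (logMaxModExp f) := by
  refine LinearOrder.convexOn_of_lt (convex_Ici t₀) fun x hx y hy hxy a b ha hb hab => ?_
  have hxy' : t₀ ≤ a • x + b • y := (convex_Ici t₀) hx hy ha.le hb.le hab
  have hMx := hpos x hx
  have hMy := hpos y hy
  simp only [smul_eq_mul, logMaxModExp] at hxy' ⊢
  calc log (maxMod f (exp (a * x + b * y)))
      ≤ log (maxMod f (exp x) ^ a * maxMod f (exp y) ^ b) :=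
        log_le_log (hpos _ hxy') (maxMod_exp_le_rpow_mul_rpow hf hxy ha.le hb.le hab)
    _ = a * log (maxMod f (exp x)) + b * log (maxMod f (exp y)) := by
        rw [log_mul (rpow_pos_of_pos hMx a).ne' (rpow_pos_of_pos hMy b).ne', log_rpow hMx,
          log_rpow hMy]

end ThreeLines

section ConvexGrowth

variable {T : ℝ → ℝ} {t₀ k d : ℝ}

lemma ConvexOn.one_add_mul_le_of_mul_le (hT : ConvexOn ℝ (Ici t₀) T) (ht₀ : 0 < t₀)
    (hk : 1 < k) (hd : 0 < d) (hTk : ∀ t ≥ t₀, k * d * T t ≤ T (k * t))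
    {t L : ℝ} (ht : k * t₀ ≤ t) (hL : 1 ≤ L) :
    (1 + (k - d⁻¹) / (k - 1) * (L - 1)) * T t ≤ T (L * t) := by
  rcases hL.eq_or_lt with rfl | hL
  · simp
  have ht_pos : 0 < t := by nlinarith
  have htk : t₀ ≤ t / k := (le_div_iff₀ (by linarith)).2 (by linarith)
  have hslope := hT.slope_mono_adjacent htk (show t₀ ≤ L * t by nlinarith)
    (div_lt_self ht_pos hk) (lt_mul_of_one_lt_left ht_pos hL)
  have hback : k * d * T (t / k) ≤ T t := by
    simpa [mul_div_cancel₀ t (by linarith : k ≠ 0)] using hTk (t / k) htk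
  have hk1 : 0 < k - 1 := by linarith
  have hcross : (k - d⁻¹) * T t ≤ k * (T t - T (t / k)) := by
    have : k * T (t / k) ≤ d⁻¹ * T t := by rw [le_inv_mul_iff₀ hd]; linarith
    linarith
  have hslope' : k * (T t - T (t / k)) * (L - 1) ≤ (k - 1) * (T (L * t) - T t) := by
    rw [show t - t / k = t * (k - 1) / k by field_simp, show L * t - t = t * (L - 1) by ring,
      div_le_div_iff₀ (by positivity) (by nlinarith)] at hslope
    refine le_of_mul_le_mul_left ?_ ht_pos
    calc t * (k * (T t - T (t / k)) * (L - 1))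
        = k * ((T t - T (t / k)) * (t * (L - 1))) := by ring
      _ ≤ k * ((T (L * t) - T t) * (t * (k - 1) / k)) := by gcongr
      _ = t * ((k - 1) * (T (L * t) - T t)) := by field_simp
  calc (1 + (k - d⁻¹) / (k - 1) * (L - 1)) * T t
      = T t + (k - d⁻¹) * T t * (L - 1) / (k - 1) := by field_simp
    _ ≤ T t + k * (T t - T (t / k)) * (L - 1) / (k - 1) := by gcongr
    _ ≤ T (L * t) := by
        rw [← le_sub_iff_add_le', div_le_iff₀ hk1]
        linarith

lemma pow_mul_le_of_mul_le (ht₀ : 0 ≤ t₀) (hk : 1 ≤ k) (hd : 0 ≤ d)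
    (hTk : ∀ t ≥ t₀, k * d * T t ≤ T (k * t)) (n : ℕ) {t : ℝ} (ht : t₀ ≤ t) :
    (k * d) ^ n * T t ≤ T (k ^ n * t) := by
  induction n with
  | zero => simp
  | succ n ih =>
    have hkn : t₀ ≤ k ^ n * t :=
      ht.trans (le_mul_of_one_le_left (ht₀.trans ht) (one_le_pow₀ hk))
    calc (k * d) ^ (n + 1) * T t = k * d * ((k * d) ^ n * T t) := by ring
      _ ≤ k * d * T (k ^ n * t) := by gcongr
      _ ≤ T (k ^ (n + 1) * t) := by rw [pow_succ', mul_assoc k (k ^ n) t]; exact hTk _ hkn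

lemma rpow_le_one_add_mul_sub_one {p k L : ℝ} (hp : 1 ≤ p) (hk : 1 < k) (hL : L ∈ Icc 1 k) :
    L ^ p ≤ 1 + (k ^ p - 1) / (k - 1) * (L - 1) := by
  have hk1 : 0 < k - 1 := by linarith
  have h := (convexOn_rpow hp).2 (show (1 : ℝ) ∈ Ici 0 by norm_num) (show k ∈ Ici 0 by
    simp only [mem_Ici]; linarith) (div_nonneg (sub_nonneg.2 hL.2) hk1.le)
    (div_nonneg (sub_nonneg.2 hL.1) hk1.le) (by field_simp; ring)
  simp only [smul_eq_mul, one_rpow, mul_one] at h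
  rw [show (k - L) / (k - 1) + (L - 1) / (k - 1) * k = L by field_simp; ring] at h
  exact h.trans_eq (by field_simp; ring)

lemma exists_pos_rpow_le_and_mul_rpow_le (hk : 1 < k) (hd : 1 < d) :
    ∃ c > (0 : ℝ), k ^ c ≤ d ∧
      ∀ L ∈ Icc 1 k, L * L ^ c ≤ 1 + (k - d⁻¹) / (k - 1) * (L - 1) := by
  have hcont : Continuous fun c : ℝ => k ^ c :=
    continuous_const.rpow continuous_id fun _ => Or.inl (by linarith)
  have hsmall : ∀ᶠ c in 𝓝 (0 : ℝ), k ^ c < d ∧ k * k ^ c < k + 1 - d⁻¹ := by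
    refine (hcont.continuousAt.eventually_lt continuousAt_const ?_).and
      ((continuous_const.mul hcont).continuousAt.eventually_lt continuousAt_const ?_)
    · simpa using hd
    · simp only [Pi.mul_apply, rpow_zero, mul_one]
      linarith [inv_lt_one_of_one_lt₀ hd]
  obtain ⟨c, ⟨hcd, hck⟩, hc⟩ :=
    ((hsmall.filter_mono nhdsWithin_le_nhds).and (self_mem_nhdsWithin (s := Ioi 0))).exists
  refine ⟨c, hc, hcd.le, fun L hL => ?_⟩
  calc L * L ^ c = L ^ (1 + c) := by rw [rpow_add (by linarith [hL.1]), rpow_one]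
    _ ≤ 1 + (k ^ (1 + c) - 1) / (k - 1) * (L - 1) :=
      rpow_le_one_add_mul_sub_one (by linarith) hk hL
    _ ≤ 1 + (k - d⁻¹) / (k - 1) * (L - 1) := by
      rw [rpow_add (by linarith), rpow_one]
      have := sub_nonneg.2 hL.1
      gcongr 1 + ?_ / _ * _
      linarith

theorem ConvexOn.exists_pos_mul_rpow_mul_le (hT : ConvexOn ℝ (Ici t₀) T) (ht₀ : 0 < t₀)
    (hT0 : ∀ t ≥ t₀, 0 ≤ T t) (hk : 1 < k) (hd : 1 < d)
    (hTk : ∀ t ≥ t₀, k * d * T t ≤ T (k * t)) :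
    ∃ c > (0 : ℝ), ∀ K ≥ 1, ∀ t ≥ k * t₀, K * K ^ c * T t ≤ T (K * t) := by
  obtain ⟨c, hc, hkc, hchord⟩ := exists_pos_rpow_le_and_mul_rpow_le hk hd
  refine ⟨c, hc, fun K hK t ht => ?_⟩
  obtain ⟨n, hnK, hKn⟩ := exists_nat_pow_near hK hk
  have hkn : 0 < k ^ n := by positivity
  have ht' : t₀ ≤ t := le_trans (le_mul_of_one_le_left ht₀.le hk.le) ht
  set L := K / k ^ n
  have hLK : K = L * k ^ n := (div_mul_cancel₀ K hkn.ne').symm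
  have hL : L ∈ Icc 1 k :=
    ⟨(one_le_div hkn).2 hnK, (div_le_iff₀ hkn).2 (by rw [← pow_succ']; exact hKn.le)⟩
  have hLc := hchord L hL
  have hβ : 0 ≤ 1 + (k - d⁻¹) / (k - 1) * (L - 1) :=
    (by positivity : 0 ≤ L * L ^ c).trans hLc
  calc K * K ^ c * T t = L * L ^ c * (k * k ^ c) ^ n * T t := by
        rw [hLK, mul_rpow (by linarith [hL.1]) hkn.le, ← rpow_pow_comm (by linarith) c n]
        ring
    _ ≤ (1 + (k - d⁻¹) / (k - 1) * (L - 1)) * ((k * d) ^ n * T t) := by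
        rw [mul_assoc]
        have := hT0 t ht'
        gcongr
    _ ≤ (1 + (k - d⁻¹) / (k - 1) * (L - 1)) * T (k ^ n * t) := by
        gcongr
        exact pow_mul_le_of_mul_le ht₀.le hk.le (by linarith) hTk n ht'
    _ ≤ T (L * (k ^ n * t)) := hT.one_add_mul_le_of_mul_le ht₀ hk (by linarith) hTk
        (ht.trans (le_mul_of_one_le_left (by linarith) (one_le_pow₀ hk.le))) hL.1
    _ = T (K * t) := by rw [hLK, mul_assoc]

end ConvexGrowth

lemma TranscendentalEntire.ne_const {f : ℂ → ℂ} (hf : TranscendentalEntire f) (c : ℂ) :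
    f ≠ Function.const ℂ c :=
  fun h => hf.2 ⟨Polynomial.C c, fun z => by simp [h]⟩

theorem stmt_10 (f : ℂ → ℂ) (hf : TranscendentalEntire f) :
    (∃ r₀ > (1:ℝ), ∃ c > (0:ℝ), ∀ k > (1:ℝ), ∀ r ≥ r₀,
        (maxMod f r) ^ (k * k ^ c) ≤ maxMod f (r ^ k)) ↔
    (∃ r₁ > (1:ℝ), ∃ k > (1:ℝ), ∃ d > (1:ℝ), ∀ r ≥ r₁,
        (maxMod f r) ^ (k * d) ≤ maxMod f (r ^ k)) := by
  constructor
  · rintro ⟨r₀, hr₀, c, hc, h⟩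
    exact ⟨r₀, hr₀, 2, one_lt_two, 2 ^ c, one_lt_rpow one_lt_two hc, h 2 one_lt_two⟩
  rintro ⟨r₁, hr₁, k, hk, d, hd, H⟩
  obtain ⟨t₀, ht₀⟩ := eventually_atTop.1 <|
    (((tendsto_maxMod_atTop hf.1 hf.ne_const).comp tendsto_exp_atTop).eventually_gt_atTop 1).and
      ((eventually_gt_atTop 0).and (eventually_ge_atTop (log r₁)))
  have hM {t : ℝ} (ht : t₀ ≤ t) : 1 < maxMod f (exp t) := (ht₀ t ht).1
  have ht₀_pos : 0 < t₀ := (ht₀ t₀ le_rfl).2.1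
  have hscale {t K : ℝ} (ht : t₀ ≤ t) (hK : 1 ≤ K) : t₀ ≤ K * t :=
    ht.trans (le_mul_of_one_le_left (ht₀_pos.le.trans ht) hK)
  have hiff {t K : ℝ} (ht : t₀ ≤ t) (hK : 1 ≤ K) (e : ℝ) :=
    rpow_maxMod_exp_le_iff (e := e) (one_pos.trans (hM ht)) (one_pos.trans (hM (hscale ht hK)))
  obtain ⟨c, hc, hgrowth⟩ :=
    (convexOn_logMaxModExp hf.1 fun t ht => one_pos.trans (hM ht)).exists_pos_mul_rpow_mul_le ht₀_pos (fun t ht => (log_pos (hM ht)).le) hk hd fun t ht =>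
      (hiff ht hk.le _).1 (H _ ((log_le_iff_le_exp (by linarith)).1 (ht₀ t ht).2.2))
  refine ⟨exp (k * t₀), one_lt_exp_iff.2 (by positivity), c, hc, fun K hK r hr => ?_⟩
  have hr0 : 0 < r := (exp_pos _).trans_le hr
  have ht : k * t₀ ≤ log r := (le_log_iff_exp_le hr0).2 hr
  rw [← exp_log hr0, hiff ((hscale le_rfl hk.le).trans ht) hK.le]
  exact hgrowth K hK.le (log r) ht
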